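/- arXiv:1312.1447 — 2 statements merged into one kernel-verified Lean document; each statement's English description precedes it below -/
import Mathlib

section
/- Let K, L, R ≥ 1 be natural numbers and let G be a (K*L) × (K*R) matrix over ZMod 2 that is block-circulant with row period L and column period R, i.e., for all i : Fin (K*L) and j : Fin (K*R), G (i + L) (j + R) = G i j, where i + L is taken modulo K*L and j + R modulo K*R. Then for every U : Fin (K*L) → ZMod 2 and every natural number k, the right cyclic shift by k*R positions of Matrix.vecMul U G equals Matrix.vecMul U_{(k*L)} G, where U_{(k*L)} is the right cyclic shift of U by k*L positions. In other words, for a tail-biting convolutional code of general rate L/R, the source packet corresponding to the k*R-bit right circular shift of a codeword is the k*L-bit right circular shift of the original source packet. -/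
/-!
On `Fin n`, viewed as the cyclic group `ℤ/n`, the shift `shiftR s` is precomposition with
translation by `-s`. Block-circulance says `G` is invariant under translating rows by `L` and
columns by `R` simultaneously, hence under `(k * L, k * R)`; and `v ᵥ* G` is equivariant under
any pair of permutations of rows and columns that fixes `G`.
-/

/-- Right cyclic shift of `v` by `s` positions: `(shiftR s v) j = v (j - s)`, index mod `n`. -/
def shiftR {n : ℕ} (s : ℕ) (v : Fin n → ZMod 2) : Fin n → ZMod 2 :=
  fun j => v ⟨(j.val + (n - s % n)) % n, Nat.mod_lt _ j.pos⟩

/-- Left cyclic shift of `v` by `s` positions: `(shiftL s v) j = v (j + s)`, index mod `n`. -/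
def shiftL {n : ℕ} (s : ℕ) (v : Fin n → ZMod 2) : Fin n → ZMod 2 :=
  fun j => v ⟨(j.val + s) % n, Nat.mod_lt _ j.pos⟩

open Fin.NatCast

theorem shiftR_eq_comp_addRight_symm {n : ℕ} [NeZero n] (s : ℕ) (v : Fin n → ZMod 2) :
    shiftR s v = v ∘ (Equiv.addRight (s : Fin n)).symm := by
  funext j
  have hsub : (Equiv.addRight (s : Fin n)).symm j = j - s := by simp [sub_eq_add_neg]
  rw [Function.comp_apply, hsub, shiftR]
  congr 1
  ext
  rw [Fin.sub_def]
  simp [Nat.add_comm]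

theorem Nat.cast_mul_eq_nsmul {A : Type*} [AddMonoidWithOne A] (k s : ℕ) :
    ((k * s : ℕ) : A) = k • (s : A) := by
  rw [← nsmul_one, ← nsmul_one s, mul_nsmul']

theorem Fin.add_natCast_val {n : ℕ} [NeZero n] (i : Fin n) (a : ℕ) :
    i + (a : Fin n) = ⟨(i.val + a) % n, Nat.mod_lt _ i.pos⟩ := by
  ext
  simp [Fin.val_add]

namespace Matrix

variable {m n α : Type*}

theorem submatrix_addRight_nsmul_eq_self [AddGroup m] [AddGroup n] {G : Matrix m n α}
    {a : m} {b : n} (hG : G.submatrix (Equiv.addRight a) (Equiv.addRight b) = G) (k : ℕ) :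
    G.submatrix (Equiv.addRight (k • a)) (Equiv.addRight (k • b)) = G := by
  induction k with
  | zero => ext; simp
  | succ k ih =>
    ext i j
    have hstep := congrFun₂ hG (i + k • a) (j + k • b)
    have hk := congrFun₂ ih i j
    simp only [submatrix_apply, Equiv.coe_addRight] at hstep hk ⊢
    rw [succ_nsmul, succ_nsmul, ← add_assoc, ← add_assoc, hstep, hk]

theorem vecMul_comp_equiv_symm [Fintype m] [NonUnitalNonAssocSemiring α] {G : Matrix m n α}
    {e₁ : m ≃ m} {e₂ : n ≃ n} (hG : G.submatrix e₁ e₂ = G) (v : m → α) :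
    (v ᵥ* G) ∘ e₂.symm = (v ∘ e₁.symm) ᵥ* G := by
  conv_lhs => rw [← hG, submatrix_vecMul_equiv]
  ext
  simp

end Matrix

/-- For a tail-biting convolutional code of general rate L/R with block-circulant
generator matrix `G (i+L) (j+R) = G i j` (row index mod `K*L`, column index mod `K*R`),
the source packet corresponding to the `k*R`-bit right circular shift of a codeword is
the `k*L`-bit right circular shift of the original source packet. -/
theorem stmt1 {K L R : ℕ} (hK : 1 ≤ K) (hL : 1 ≤ L) (hR : 1 ≤ R)
    (G : Matrix (Fin (K * L)) (Fin (K * R)) (ZMod 2))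
    (hG : ∀ (i : Fin (K * L)) (j : Fin (K * R)),
      G ⟨(i.val + L) % (K * L), Nat.mod_lt _ i.pos⟩
        ⟨(j.val + R) % (K * R), Nat.mod_lt _ j.pos⟩ = G i j)
    (U : Fin (K * L) → ZMod 2) (k : ℕ) :
    shiftR (k * R) (Matrix.vecMul U G) = Matrix.vecMul (shiftR (k * L) U) G := by
  have : NeZero (K * L) := ⟨by positivity⟩
  have : NeZero (K * R) := ⟨by positivity⟩
  have hperiod : G.submatrix (Equiv.addRight (L : Fin (K * L)))
      (Equiv.addRight (R : Fin (K * R))) = G := by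
    ext i j
    simpa [Fin.add_natCast_val] using hG i j
  have hshift := Matrix.vecMul_comp_equiv_symm
    (Matrix.submatrix_addRight_nsmul_eq_self hperiod k) U
  rwa [shiftR_eq_comp_addRight_symm, shiftR_eq_comp_addRight_symm, Nat.cast_mul_eq_nsmul,
    Nat.cast_mul_eq_nsmul]
end

section
/- Let K ≥ 1 and R ≥ 1, let g : Fin (K*R) → ZMod 2, and let G be the K × (K*R) circulant generator matrix over ZMod 2 with G i j = g(j - R*i mod K*R). Suppose the encoding map E : (Fin K → ZMod 2) → (Fin (K*R) → ZMod 2) given by E(U) = Matrix.vecMul U G is injective, and let D be any left inverse of E (a decoding function with D(E(U)) = U for all U). Then for every source packet U, every natural number k, and C = E(U), the decoder output on the k*R-bit right circular shift of C is the k-bit right circular shift of U: D(C_{(k*R)}) = U_{(k)}. That is, if the initial and terminal states of the convolutional encoder coincide (tail-biting), decoding the k*R-bit circularly shifted codeword yields the k-bit circularly shifted source packet. -/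
open Fin.NatCast Matrix

section Shift

variable {n : ℕ}

lemma shiftR_apply [NeZero n] (s : ℕ) (v : Fin n → ZMod 2) (j : Fin n) :
    shiftR s v j = v (j - (s : Fin n)) := by
  unfold shiftR
  congr 1
  ext
  simp [Fin.sub_def, Fin.val_natCast, Nat.add_comm]

lemma shiftR_congr {s t : ℕ} (h : s ≡ t [MOD n]) (v : Fin n → ZMod 2) :
    shiftR s v = shiftR t v := by
  funext j
  simp only [shiftR, show s % n = t % n from h]

lemma shiftR_shiftR [NeZero n] (s t : ℕ) (v : Fin n → ZMod 2) :
    shiftR s (shiftR t v) = shiftR (s + t) v := by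
  funext j
  simp only [shiftR_apply, Nat.cast_add, sub_add_eq_sub_sub]

end Shift

def tailBitingGenerator (K R : ℕ) (g : Fin (K * R) → ZMod 2) :
    Matrix (Fin K) (Fin (K * R)) (ZMod 2) :=
  Matrix.of fun i => shiftR (R * i.val) g

lemma mul_val_add_natCast_modEq {K : ℕ} [NeZero K] (R : ℕ) (i : Fin K) (k : ℕ) :
    R * (i + (k : Fin K)).val ≡ k * R + R * i.val [MOD K * R] := by
  have hidx : (i.val + k % K) % K ≡ i.val + k [MOD K] :=
    (Nat.mod_modEq _ _).trans ((Nat.mod_modEq k K).add_left _)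
  rw [Fin.val_add, Fin.val_natCast, Nat.mul_comm K R, Nat.mul_comm k R, ← Nat.mul_add,
    Nat.add_comm k]
  exact hidx.mul_left' R

lemma shiftR_vecMul_tailBitingGenerator {K R : ℕ} (g : Fin (K * R) → ZMod 2)
    (U : Fin K → ZMod 2) (k : ℕ) :
    shiftR (k * R) (U ᵥ* tailBitingGenerator K R g)
      = shiftR k U ᵥ* tailBitingGenerator K R g := by
  rcases Nat.eq_zero_or_pos (K * R) with hKR | hKR
  · funext j
    exact (Fin.cast hKR j).elim0
  have : NeZero K := ⟨by rintro rfl; simp at hKR⟩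
  have : NeZero (K * R) := ⟨hKR.ne'⟩
  funext j
  rw [shiftR_apply]
  simp only [vecMul, dotProduct, tailBitingGenerator, of_apply, shiftR_apply (n := K)]
  refine Fintype.sum_equiv (Equiv.addRight (k : Fin K)) _ _ fun i => ?_
  have hrow : shiftR (R * (i + (k : Fin K)).val) g = shiftR (k * R) (shiftR (R * i.val) g) := by
    rw [shiftR_shiftR]
    exact shiftR_congr (mul_val_add_natCast_modEq R i k) g
  rw [Equiv.coe_addRight, add_sub_cancel_right, hrow, shiftR_apply (k * R)]

theorem stmt2_general {K R : ℕ}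
    (g : Fin (K * R) → ZMod 2)
    (G : Matrix (Fin K) (Fin (K * R)) (ZMod 2))
    (hG : ∀ (i : Fin K) (j : Fin (K * R)), G i j = shiftR (R * i.val) g j)
    (E : (Fin K → ZMod 2) → (Fin (K * R) → ZMod 2))
    (hE : ∀ U, E U = Matrix.vecMul U G)
    (D : (Fin (K * R) → ZMod 2) → (Fin K → ZMod 2))
    (hD : ∀ U, D (E U) = U)
    (U : Fin K → ZMod 2) (k : ℕ) :
    D (shiftR (k * R) (E U)) = shiftR k U := by
  have hG : G = tailBitingGenerator K R g := Matrix.ext hG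
  have hE : E = (· ᵥ* G) := funext hE
  subst hG hE
  rw [shiftR_vecMul_tailBitingGenerator, hD]

/-- Tail-biting convolutional code: if the encoding map `E U = U · G` (with `G` the
circulant generator matrix `G i j = g (j - R*i)`) is injective and `D` is any left
inverse of `E`, then decoding the `k*R`-bit right circularly shifted codeword yields
the `k`-bit right circularly shifted source packet. -/
theorem stmt2 {K R : ℕ} (hK : 1 ≤ K) (hR : 1 ≤ R)
    (g : Fin (K * R) → ZMod 2)
    (G : Matrix (Fin K) (Fin (K * R)) (ZMod 2))
    (hG : ∀ (i : Fin K) (j : Fin (K * R)), G i j = shiftR (R * i.val) g j)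
    (E : (Fin K → ZMod 2) → (Fin (K * R) → ZMod 2))
    (hE : ∀ U, E U = Matrix.vecMul U G)
    (hEinj : Function.Injective E)
    (D : (Fin (K * R) → ZMod 2) → (Fin K → ZMod 2))
    (hD : ∀ U, D (E U) = U)
    (U : Fin K → ZMod 2) (k : ℕ) :
    D (shiftR (k * R) (E U)) = shiftR k U :=
  stmt2_general g G hG E hE D hD U k
end
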